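/- Let G be a finite connected simple graph, let e be an edge of G, and let G' be the subdivision of G at e with new edges e₁ and e₂. Then in the polynomial ring ℤ[x_f : f ∈ E(G')] the first Symanzik polynomial of G' equals the image of the first Symanzik polynomial of G under the ring homomorphism ℤ[x_f : f ∈ E(G)] → ℤ[x_f : f ∈ E(G')] which sends x_e to x_{e₁} + x_{e₂} and sends x_f to x_f for every edge f ≠ e; that is, Ψ_{G'} is obtained from Ψ_G by substituting x_{e₁} + x_{e₂} for x_e. -/

import Mathlib

/-!
Write `w` for the new vertex and `e = {u, v}`. A spanning tree of the subdivision contains `e₁` or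
`e₂`, as these are the only edges at `w`. If it contains both, it comes from a spanning tree
`T ∋ e` of `G` by replacing `e` with the path `e₁ e₂` (`liftThrough`), and its complement is the
complement of `T`. If it contains only `e₁` (resp. `e₂`), it comes from a spanning tree `T ∌ e` by
attaching `w` as a leaf at `u` (resp. `v`) (`liftPendant`), and its complement is that of `T` with
`e` replaced by `e₂` (resp. `e₁`). So every monomial of `Ψ_G` containing `x_e` turns into the two
monomials with `x_{e₂}`, resp. `x_{e₁}`, in its place, which is the substitution
`x_e ↦ x_{e₁} + x_{e₂}`. Both constructions add one vertex and one edge and preserve connectivity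
(collapse `w` onto a neighbour to go back), so by `#E + 1 = #V` they preserve being a tree.
-/

open SimpleGraph MvPolynomial
open scoped Classical

variable {V : Type*}

/-- The subdivision of a simple graph `G` at the edge `e = {u, v}`: the graph on the vertex
set `V ⊕ Unit` (the extra vertex `w = Sum.inr ()` is the new vertex) whose edges are all edges
of `G` except `e`, together with the two new edges `e₁ = {u, w}` and `e₂ = {w, v}`. -/
def subdiv (G : SimpleGraph V) (u v : V) : SimpleGraph (V ⊕ Unit) where
  Adj a b :=
    match a, b with
    | Sum.inl a, Sum.inl b => G.Adj a b ∧ s(a, b) ≠ s(u, v)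
    | Sum.inl a, Sum.inr _ => a = u ∨ a = v
    | Sum.inr _, Sum.inl b => b = u ∨ b = v
    | Sum.inr _, Sum.inr _ => False
  symm := by
    refine ⟨?_⟩
    rintro (a | a) (b | b) h
    · exact ⟨h.1.symm, fun hc => h.2 (by rw [Sym2.eq_swap]; exact hc)⟩
    · exact h
    · exact h
    · exact h
  loopless := by
    refine ⟨?_⟩
    rintro (a | a) h
    · exact G.irrefl h.1
    · exact h

/-- The first new edge `e₁ = {u, w}` of the subdivision. -/
def newE₁ (u : V) : Sym2 (V ⊕ Unit) := s(Sum.inl u, Sum.inr ())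

/-- The second new edge `e₂ = {w, v}` of the subdivision. -/
def newE₂ (v : V) : Sym2 (V ⊕ Unit) := s(Sum.inr (), Sum.inl v)

/-- The edge sets of the spanning trees of `G` (a spanning subgraph is determined by its edge
set; it is a spanning tree iff it is connected and acyclic). -/
noncomputable def spanningTreeSets (G : SimpleGraph V) [Fintype V] [DecidableEq V] :
    Finset (Finset (Sym2 V)) :=
  Finset.univ.filter fun s => (s : Set (Sym2 V)) ⊆ G.edgeSet ∧
    (fromEdgeSet (s : Set (Sym2 V))).IsTree

/-- The first Symanzik polynomial `Ψ_G = Σ_T Π_{f ∉ T} x_f`, the sum over all spanning trees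
`T` of `G` of the product of the variables of the edges not in `T`. -/
noncomputable def firstSymanzik (G : SimpleGraph V) [Fintype V] [DecidableEq V] :
    MvPolynomial (Sym2 V) ℤ :=
  ∑ s ∈ spanningTreeSets G, ∏ f ∈ G.edgeSet.toFinset \ s, X f

open Finset

namespace SimpleGraph

variable {α β : Type*}

theorem Reachable.map_of_forall_adj {H : SimpleGraph α} {K : SimpleGraph β} (f : α → β)
    (hf : ∀ x y, H.Adj x y → K.Reachable (f x) (f y)) {x y : α} (h : H.Reachable x y) :
    K.Reachable (f x) (f y) := by
  rw [reachable_iff_reflTransGen] at h ⊢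
  exact h.lift' f fun a b hab => (reachable_iff_reflTransGen _ _).1 (hf a b hab)

theorem reachable_fromEdgeSet_of_mem {S : Set (Sym2 α)} {x y : α} (h : s(x, y) ∈ S) :
    (fromEdgeSet S).Reachable x y := by
  by_cases hxy : x = y
  · exact hxy ▸ Reachable.refl x
  · exact Adj.reachable ((fromEdgeSet_adj S).2 ⟨h, hxy⟩)

theorem Adj.reachable_map_of_fromEdgeSet {S : Set (Sym2 α)} {S' : Set (Sym2 β)} (f : α → β)
    (hf : ∀ g ∈ S, Sym2.map f g ∈ S' ∨ (Sym2.map f g).IsDiag) {x y : α}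
    (h : (fromEdgeSet S).Adj x y) : (fromEdgeSet S').Reachable (f x) (f y) := by
  rcases hf _ ((fromEdgeSet_adj S).1 h).1 with hmem | hdiag
  · exact reachable_fromEdgeSet_of_mem hmem
  · rw [Sym2.map_mk, Sym2.mk_isDiag_iff] at hdiag
    exact hdiag ▸ Reachable.refl _

theorem connected_iff_of_retract {H : SimpleGraph α} {K : SimpleGraph β} (i : α → β) (r : β → α)
    (hri : ∀ x, r (i x) = x) (hi : ∀ x y, H.Adj x y → K.Reachable (i x) (i y))
    (hr : ∀ p q, K.Adj p q → H.Reachable (r p) (r q)) (hir : ∀ p, K.Reachable (i (r p)) p) :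
    K.Connected ↔ H.Connected := by
  constructor
  · intro hK
    have : Nonempty α := ⟨r hK.nonempty.some⟩
    exact ⟨fun x y => hri x ▸ hri y ▸ (hK.preconnected (i x) (i y)).map_of_forall_adj r hr⟩
  · intro hH
    have : Nonempty β := ⟨i hH.nonempty.some⟩
    exact ⟨fun p q => ((hir p).symm.trans ((hH.preconnected _ _).map_of_forall_adj i hi)).trans
      (hir q)⟩

theorem isTree_fromEdgeSet_iff [Fintype α] {t : Finset (Sym2 α)} (ht : ∀ f ∈ t, ¬ f.IsDiag) :
    (fromEdgeSet (t : Set (Sym2 α))).IsTree ↔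
      (fromEdgeSet (t : Set (Sym2 α))).Connected ∧ #t + 1 = Fintype.card α := by
  have hedges : (fromEdgeSet (t : Set (Sym2 α))).edgeSet = t := by
    rw [edgeSet_fromEdgeSet, sdiff_eq_left, Set.disjoint_left]
    exact ht
  rw [isTree_iff_connected_and_card, hedges, Nat.card_eq_fintype_card]
  simp

end SimpleGraph

section Sym2Sum

variable {u v a : V}

@[simp]
theorem map_inl_ne_newE₁ (f : Sym2 V) (a : V) : Sym2.map Sum.inl f ≠ newE₁ a := by
  induction f using Sym2.ind with
  | _ x y => simp [newE₁]

@[simp]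
theorem map_inl_ne_newE₂ (f : Sym2 V) (a : V) : Sym2.map Sum.inl f ≠ newE₂ a := by
  induction f using Sym2.ind with
  | _ x y => simp [newE₂]

@[simp]
theorem map_inl_ne_inr_inr (f : Sym2 V) : Sym2.map Sum.inl f ≠ s(Sum.inr (), Sum.inr ()) := by
  induction f using Sym2.ind with
  | _ x y => simp

theorem map_inl_injective : Function.Injective (Sym2.map (Sum.inl : V → V ⊕ Unit)) :=
  Sym2.map.injective Sum.inl_injective

@[simp]
theorem map_inl_inj {f f' : Sym2 V} :
    Sym2.map (Sum.inl : V → V ⊕ Unit) f = Sym2.map Sum.inl f' ↔ f = f' :=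
  map_inl_injective.eq_iff

theorem newE₂_eq_newE₁ (a : V) : newE₂ a = newE₁ a := Sym2.eq_swap

@[simp]
theorem newE₁_inj : newE₁ u = newE₁ v ↔ u = v := by
  simp [newE₁]

@[simp]
theorem newE₁_eq_newE₂_iff : newE₁ u = newE₂ v ↔ u = v := by
  rw [newE₂_eq_newE₁, newE₁_inj]

@[simp]
theorem inr_inr_ne_newE₁ (a : V) : s(Sum.inr (), Sum.inr ()) ≠ newE₁ a := by
  simp [newE₁]

@[simp]
theorem inr_inr_ne_newE₂ (a : V) : s(Sum.inr (), Sum.inr ()) ≠ newE₂ a := by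
  simp [newE₂]

theorem sym2_sum_unit_cases (g : Sym2 (V ⊕ Unit)) :
    (∃ f, g = Sym2.map Sum.inl f) ∨ (∃ a, g = newE₁ a) ∨ g = s(Sum.inr (), Sum.inr ()) := by
  induction g using Sym2.ind with
  | _ x y =>
    rcases x with x | ⟨⟩ <;> rcases y with y | ⟨⟩
    · exact Or.inl ⟨s(x, y), rfl⟩
    · exact Or.inr (Or.inl ⟨x, rfl⟩)
    · exact Or.inr (Or.inl ⟨y, Sym2.eq_swap⟩)
    · exact Or.inr (Or.inr rfl)

@[simp]
theorem map_collapse_map_inl (f : Sym2 V) :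
    Sym2.map (Sum.elim id fun _ => a) (Sym2.map (Sum.inl : V → V ⊕ Unit) f) = f := by
  rw [Sym2.map_map, Sum.elim_comp_inl, Sym2.map_id, id]

end Sym2Sum

section Lifts

variable [DecidableEq V] {u v a : V} {s E : Finset (Sym2 V)}
  {s' t' : Finset (Sym2 (V ⊕ Unit))}

def liftThrough (u v : V) (s : Finset (Sym2 V)) : Finset (Sym2 (V ⊕ Unit)) :=
  insert (newE₁ u) (insert (newE₂ v) ((s.erase s(u, v)).image (Sym2.map Sum.inl)))

def liftPendant (a : V) (s : Finset (Sym2 V)) : Finset (Sym2 (V ⊕ Unit)) :=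
  insert (newE₁ a) (s.image (Sym2.map Sum.inl))

@[simp]
theorem map_inl_mem_liftThrough {f : Sym2 V} :
    Sym2.map Sum.inl f ∈ liftThrough u v s ↔ f ≠ s(u, v) ∧ f ∈ s := by
  simp [liftThrough]

@[simp]
theorem map_inl_mem_liftPendant {f : Sym2 V} : Sym2.map Sum.inl f ∈ liftPendant a s ↔ f ∈ s := by
  simp [liftPendant]

@[simp]
theorem newE₁_mem_liftThrough : newE₁ a ∈ liftThrough u v s ↔ a = u ∨ a = v := by
  simp [liftThrough, newE₂_eq_newE₁]

@[simp]
theorem newE₁_mem_liftPendant : newE₁ a ∈ liftPendant u s ↔ a = u := by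
  simp [liftPendant]

@[simp]
theorem newE₂_mem_liftThrough : newE₂ a ∈ liftThrough u v s ↔ a = u ∨ a = v := by
  rw [newE₂_eq_newE₁, newE₁_mem_liftThrough]

@[simp]
theorem newE₂_mem_liftPendant : newE₂ a ∈ liftPendant u s ↔ a = u := by
  rw [newE₂_eq_newE₁, newE₁_mem_liftPendant]

@[simp]
theorem inr_inr_notMem_liftThrough : s(Sum.inr (), Sum.inr ()) ∉ liftThrough u v s := by
  simp [liftThrough, newE₁, newE₂]

@[simp]
theorem inr_inr_notMem_liftPendant : s(Sum.inr (), Sum.inr ()) ∉ liftPendant a s := by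
  simp [liftPendant, newE₁]

theorem card_liftThrough (huv : u ≠ v) (he : s(u, v) ∈ s) : #(liftThrough u v s) = #s + 1 := by
  rw [liftThrough, card_insert_of_notMem (by simp [newE₂_eq_newE₁, huv]),
    card_insert_of_notMem (by simp), card_image_of_injective _ map_inl_injective,
    card_erase_of_mem he]
  have := card_pos.2 ⟨_, he⟩
  omega

theorem card_liftPendant : #(liftPendant a s) = #s + 1 := by
  rw [liftPendant, card_insert_of_notMem (by simp),
    card_image_of_injective _ map_inl_injective]

theorem liftThrough_sdiff_liftThrough (hs : s(u, v) ∈ s) :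
    liftThrough u v E \ liftThrough u v s = (E \ s).image (Sym2.map Sum.inl) := by
  ext g
  rcases sym2_sum_unit_cases g with ⟨f, rfl⟩ | ⟨b, rfl⟩ | rfl
  · simp only [mem_sdiff, map_inl_mem_liftThrough, mem_image, map_inl_inj, exists_eq_right]
    by_cases hf : f = s(u, v)
    · simp [hf, hs]
    · simp [hf]
  · simp only [mem_sdiff, newE₁_mem_liftThrough, and_not_self, mem_image, map_inl_ne_newE₁,
      and_false, exists_false]
  · simp

theorem liftThrough_sdiff_liftPendant_left (huv : u ≠ v) :
    liftThrough u v E \ liftPendant u s =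
      insert (newE₂ v) (((E \ s).erase s(u, v)).image (Sym2.map Sum.inl)) := by
  ext g
  rcases sym2_sum_unit_cases g with ⟨f, rfl⟩ | ⟨b, rfl⟩ | rfl
  · simp [and_assoc]
  · simp only [mem_sdiff, newE₁_mem_liftThrough, newE₁_mem_liftPendant, mem_insert,
      newE₁_eq_newE₂_iff, mem_image, map_inl_ne_newE₁, and_false, exists_false, or_false]
    grind
  · simp

theorem liftThrough_sdiff_liftPendant_right (huv : u ≠ v) :
    liftThrough u v E \ liftPendant v s =
      insert (newE₁ u) (((E \ s).erase s(u, v)).image (Sym2.map Sum.inl)) := by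
  ext g
  rcases sym2_sum_unit_cases g with ⟨f, rfl⟩ | ⟨b, rfl⟩ | rfl
  · simp [and_assoc]
  · simp only [mem_sdiff, newE₁_mem_liftThrough, newE₁_mem_liftPendant, mem_insert,
      newE₁_inj, mem_image, map_inl_ne_newE₁, and_false, exists_false, or_false]
    grind
  · simp

theorem liftThrough_injOn : Set.InjOn (liftThrough u v) {s | s(u, v) ∈ s} := by
  intro s hs t ht hst
  ext f
  by_cases hf : f = s(u, v)
  · exact iff_of_true (hf ▸ hs) (hf ▸ ht)
  · simpa [hf] using congrArg (Sym2.map Sum.inl f ∈ ·) hst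

theorem liftPendant_injective (a : V) : Function.Injective (liftPendant (V := V) a) := by
  intro s t hst
  ext f
  simpa using congrArg (Sym2.map Sum.inl f ∈ ·) hst

theorem liftThrough_ne_liftPendant (huv : u ≠ v) (a : V) (s t : Finset (Sym2 V)) :
    liftThrough u v s ≠ liftPendant a t := by
  intro h
  have h₁ := congrArg (newE₁ u ∈ ·) h
  have h₂ := congrArg (newE₂ v ∈ ·) h
  simp only [newE₁_mem_liftThrough, newE₂_mem_liftThrough, newE₁_mem_liftPendant,
    newE₂_mem_liftPendant, true_or, or_true, eq_iff_iff, true_iff] at h₁ h₂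
  exact huv (h₁.trans h₂.symm)

theorem liftPendant_ne_liftPendant (huv : u ≠ v) (s t : Finset (Sym2 V)) :
    liftPendant u s ≠ liftPendant v t := by
  intro h
  simpa [huv] using congrArg (newE₁ u ∈ ·) h

theorem liftThrough_subset_liftThrough_iff (hE : s(u, v) ∈ E) :
    liftThrough u v s ⊆ liftThrough u v E ↔ s ⊆ E := by
  refine ⟨fun h f hf => ?_, fun h => ?_⟩
  · by_cases hfe : f = s(u, v)
    · exact hfe ▸ hE
    · exact (map_inl_mem_liftThrough.1 (h (map_inl_mem_liftThrough.2 ⟨hfe, hf⟩))).2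
  · unfold liftThrough
    gcongr

theorem liftPendant_subset_liftThrough_iff (ha : a = u ∨ a = v) (hs : s(u, v) ∉ s) :
    liftPendant a s ⊆ liftThrough u v E ↔ s ⊆ E := by
  simp only [liftPendant, insert_subset_iff, newE₁_mem_liftThrough, ha, true_and,
    image_subset_iff, map_inl_mem_liftThrough]
  exact ⟨fun h f hf => (h f hf).2, fun h f hf => ⟨ne_of_mem_of_not_mem hf hs, h hf⟩⟩

theorem eq_of_subset_liftThrough (hs' : s' ⊆ liftThrough u v E) (ht' : t' ⊆ liftThrough u v E)
    (h : ∀ f, Sym2.map Sum.inl f ∈ s' ↔ Sym2.map Sum.inl f ∈ t')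
    (hu : newE₁ u ∈ s' ↔ newE₁ u ∈ t') (hv : newE₂ v ∈ s' ↔ newE₂ v ∈ t') : s' = t' := by
  ext g
  rcases sym2_sum_unit_cases g with ⟨f, rfl⟩ | ⟨b, rfl⟩ | rfl
  · exact h f
  · by_cases hb : b = u ∨ b = v
    · rcases hb with rfl | rfl
      · exact hu
      · rwa [← newE₂_eq_newE₁]
    · exact iff_of_false (fun hb' => hb (newE₁_mem_liftThrough.1 (hs' hb')))
        (fun hb' => hb (newE₁_mem_liftThrough.1 (ht' hb')))
  · exact iff_of_false (fun h => by simpa using hs' h) (fun h => by simpa using ht' h)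

end Lifts

section Trees

variable [DecidableEq V] {u v a : V} {s : Finset (Sym2 V)}

theorem connected_liftThrough_iff (he : s(u, v) ∈ s) :
    (fromEdgeSet (liftThrough u v s : Set (Sym2 (V ⊕ Unit)))).Connected ↔
      (fromEdgeSet (s : Set (Sym2 V))).Connected := by
  have hu : (fromEdgeSet (liftThrough u v s : Set (Sym2 (V ⊕ Unit)))).Reachable
      (Sum.inl u) (Sum.inr ()) :=
    reachable_fromEdgeSet_of_mem (show newE₁ u ∈ liftThrough u v s by simp)
  have hv : (fromEdgeSet (liftThrough u v s : Set (Sym2 (V ⊕ Unit)))).Reachable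
      (Sum.inr ()) (Sum.inl v) :=
    reachable_fromEdgeSet_of_mem (show newE₂ v ∈ liftThrough u v s by simp)
  -- collapsing `w` onto `u` turns `e₁` into a loop and `e₂` into `e`
  refine connected_iff_of_retract Sum.inl (Sum.elim id fun _ => u) (fun _ => rfl) ?_ ?_ ?_
  · intro x y hxy
    obtain ⟨hmem, -⟩ := (fromEdgeSet_adj _).1 hxy
    by_cases hxy' : s(x, y) = s(u, v)
    · rcases Sym2.eq_iff.1 hxy' with ⟨rfl, rfl⟩ | ⟨rfl, rfl⟩
      · exact hu.trans hv
      · exact (hu.trans hv).symm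
    · exact reachable_fromEdgeSet_of_mem (map_inl_mem_liftThrough.2 ⟨hxy', hmem⟩)
  · refine fun p q hpq => hpq.reachable_map_of_fromEdgeSet _ fun g hg => ?_
    rcases sym2_sum_unit_cases g with ⟨f, rfl⟩ | ⟨b, rfl⟩ | rfl
    · simp_all
    · rcases newE₁_mem_liftThrough.1 hg with rfl | rfl
      · simp [newE₁]
      · simp [newE₁, Sym2.eq_swap, he]
    · simp at hg
  · rintro (x | ⟨⟩)
    · rfl
    · exact hu

theorem connected_liftPendant_iff :
    (fromEdgeSet (liftPendant a s : Set (Sym2 (V ⊕ Unit)))).Connected ↔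
      (fromEdgeSet (s : Set (Sym2 V))).Connected := by
  refine connected_iff_of_retract Sum.inl (Sum.elim id fun _ => a) (fun _ => rfl) ?_ ?_ ?_
  · exact fun x y hxy => hxy.reachable_map_of_fromEdgeSet _ fun f hf =>
      Or.inl (map_inl_mem_liftPendant.2 hf)
  · refine fun p q hpq => hpq.reachable_map_of_fromEdgeSet _ fun g hg => ?_
    rcases sym2_sum_unit_cases g with ⟨f, rfl⟩ | ⟨b, rfl⟩ | rfl
    · simp_all
    · rw [newE₁_mem_liftPendant.1 hg]
      simp [newE₁]
    · simp at hg
  · rintro (x | ⟨⟩)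
    · rfl
    · exact reachable_fromEdgeSet_of_mem (show newE₁ a ∈ liftPendant a s by simp)

variable [Fintype V]

theorem isTree_liftThrough_iff (huv : u ≠ v) (he : s(u, v) ∈ s) (hs : ∀ f ∈ s, ¬f.IsDiag) :
    (fromEdgeSet (liftThrough u v s : Set (Sym2 (V ⊕ Unit)))).IsTree ↔
      (fromEdgeSet (s : Set (Sym2 V))).IsTree := by
  have hs' : ∀ g ∈ liftThrough u v s, ¬g.IsDiag := by
    intro g hg
    rcases sym2_sum_unit_cases g with ⟨f, rfl⟩ | ⟨b, rfl⟩ | rfl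
    · exact fun hd =>
        hs f (map_inl_mem_liftThrough.1 hg).2 ((Sym2.isDiag_map Sum.inl_injective).1 hd)
    · simp [newE₁]
    · simp at hg
  rw [isTree_fromEdgeSet_iff hs', isTree_fromEdgeSet_iff hs, connected_liftThrough_iff he,
    card_liftThrough huv he, Fintype.card_sum, Fintype.card_unit, add_left_inj]

theorem isTree_liftPendant_iff (hs : ∀ f ∈ s, ¬f.IsDiag) :
    (fromEdgeSet (liftPendant a s : Set (Sym2 (V ⊕ Unit)))).IsTree ↔
      (fromEdgeSet (s : Set (Sym2 V))).IsTree := by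
  have hs' : ∀ g ∈ liftPendant a s, ¬g.IsDiag := by
    intro g hg
    rcases sym2_sum_unit_cases g with ⟨f, rfl⟩ | ⟨b, rfl⟩ | rfl
    · exact fun hd =>
        hs f (map_inl_mem_liftPendant.1 hg) ((Sym2.isDiag_map Sum.inl_injective).1 hd)
    · simp [newE₁]
    · simp at hg
  rw [isTree_fromEdgeSet_iff hs', isTree_fromEdgeSet_iff hs, connected_liftPendant_iff,
    card_liftPendant, Fintype.card_sum, Fintype.card_unit, add_left_inj]

end Trees

section SpanningTrees

variable [Fintype V] [DecidableEq V] {G : SimpleGraph V} {u v a : V} {s : Finset (Sym2 V)}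
  {s' : Finset (Sym2 (V ⊕ Unit))}

theorem edgeFinset_subdiv :
    (subdiv G u v).edgeSet.toFinset = liftThrough u v G.edgeSet.toFinset := by
  ext g
  rw [Set.mem_toFinset]
  rcases sym2_sum_unit_cases g with ⟨f, rfl⟩ | ⟨b, rfl⟩ | rfl
  · induction f using Sym2.ind with
    | _ x y =>
      rw [map_inl_mem_liftThrough, Set.mem_toFinset, Sym2.map_mk, mem_edgeSet, mem_edgeSet]
      exact and_comm
  · rw [newE₁_mem_liftThrough]
    exact Iff.rfl
  · simp

theorem liftThrough_mem_spanningTreeSets_iff (he : G.Adj u v) (hs : s(u, v) ∈ s) :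
    liftThrough u v s ∈ spanningTreeSets (subdiv G u v) ↔ s ∈ spanningTreeSets G := by
  simp only [spanningTreeSets, mem_filter, mem_univ, true_and, ← Set.subset_toFinset,
    edgeFinset_subdiv, liftThrough_subset_liftThrough_iff (Set.mem_toFinset.2 (G.mem_edgeSet.2 he))]
  exact and_congr_right fun hsub => isTree_liftThrough_iff he.ne hs
    fun f hf => G.not_isDiag_of_mem_edgeSet (Set.mem_toFinset.1 (hsub hf))

theorem liftPendant_mem_spanningTreeSets_iff (ha : a = u ∨ a = v) (hs : s(u, v) ∉ s) :
    liftPendant a s ∈ spanningTreeSets (subdiv G u v) ↔ s ∈ spanningTreeSets G := by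
  simp only [spanningTreeSets, mem_filter, mem_univ, true_and, ← Set.subset_toFinset,
    edgeFinset_subdiv, liftPendant_subset_liftThrough_iff ha hs]
  exact and_congr_right fun hsub => isTree_liftPendant_iff
    fun f hf => G.not_isDiag_of_mem_edgeSet (Set.mem_toFinset.1 (hsub hf))

theorem newE_mem_of_mem_spanningTreeSets_subdiv (hs' : s' ∈ spanningTreeSets (subdiv G u v)) :
    newE₁ u ∈ s' ∨ newE₂ v ∈ s' := by
  simp only [spanningTreeSets, mem_filter, mem_univ, true_and, ← Set.subset_toFinset,
    edgeFinset_subdiv] at hs'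
  obtain ⟨hsub, htree⟩ := hs'
  have : Nontrivial (V ⊕ Unit) := ⟨⟨Sum.inl u, Sum.inr (), Sum.inl_ne_inr⟩⟩
  obtain ⟨p, hp⟩ := htree.connected.preconnected.exists_adj_of_nontrivial (Sum.inr ())
  obtain ⟨hmem, hne⟩ := (fromEdgeSet_adj _).1 hp
  rcases p with b | ⟨⟩
  · have hb : newE₁ b ∈ s' := by rwa [newE₁, Sym2.eq_swap]
    rcases newE₁_mem_liftThrough.1 (hsub hb) with rfl | rfl
    · exact Or.inl hb
    · exact Or.inr (by rwa [newE₂_eq_newE₁])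
  · exact absurd rfl hne

theorem exists_lift_eq_of_mem_spanningTreeSets_subdiv (he : G.Adj u v)
    (hs' : s' ∈ spanningTreeSets (subdiv G u v)) :
    (∃ s ∈ spanningTreeSets G, s(u, v) ∈ s ∧ liftThrough u v s = s') ∨
      (∃ s ∈ spanningTreeSets G, s(u, v) ∉ s ∧ liftPendant u s = s') ∨
      ∃ s ∈ spanningTreeSets G, s(u, v) ∉ s ∧ liftPendant v s = s' := by
  have hE : s(u, v) ∈ G.edgeSet.toFinset := Set.mem_toFinset.2 (G.mem_edgeSet.2 he)
  have hsub : s' ⊆ liftThrough u v G.edgeSet.toFinset := by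
    rw [← edgeFinset_subdiv, Set.subset_toFinset]
    exact (mem_filter.1 hs').2.1
  set s₀ := s'.preimage (Sym2.map Sum.inl) map_inl_injective.injOn
  have hs₀ : ∀ f, f ∈ s₀ ↔ Sym2.map Sum.inl f ∈ s' := fun f => mem_preimage
  have he₀ : s(u, v) ∉ s₀ := fun h =>
    (map_inl_mem_liftThrough.1 (hsub ((hs₀ _).1 h))).1 rfl
  have hs₀E : s₀ ⊆ G.edgeSet.toFinset := fun f hf =>
    (map_inl_mem_liftThrough.1 (hsub ((hs₀ f).1 hf))).2
  by_cases h₁ : newE₁ u ∈ s' <;> by_cases h₂ : newE₂ v ∈ s'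
  · have hL : liftThrough u v (insert s(u, v) s₀) = s' := by
      refine eq_of_subset_liftThrough (E := G.edgeSet.toFinset)
        ((liftThrough_subset_liftThrough_iff hE).2 (insert_subset hE hs₀E)) hsub (fun f => ?_)
        (by simp [h₁]) (by simp [h₂])
      rw [map_inl_mem_liftThrough, mem_insert, ← hs₀]
      by_cases hf : f = s(u, v)
      · simp [hf, he₀]
      · simp [hf]
    exact Or.inl ⟨_, (liftThrough_mem_spanningTreeSets_iff he (mem_insert_self _ _)).1
      (hL ▸ hs'), mem_insert_self _ _, hL⟩
  · have hL : liftPendant u s₀ = s' :=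
      eq_of_subset_liftThrough ((liftPendant_subset_liftThrough_iff (.inl rfl) he₀).2 hs₀E) hsub
        (by simp [hs₀]) (by simp [h₁]) (by simp [h₂, he.ne'])
    exact Or.inr (Or.inl ⟨_, (liftPendant_mem_spanningTreeSets_iff (.inl rfl) he₀).1
      (hL ▸ hs'), he₀, hL⟩)
  · have hL : liftPendant v s₀ = s' :=
      eq_of_subset_liftThrough ((liftPendant_subset_liftThrough_iff (.inr rfl) he₀).2 hs₀E) hsub
        (by simp [hs₀]) (by simp [h₁, he.ne]) (by simp [h₂])
    exact Or.inr (Or.inr ⟨_, (liftPendant_mem_spanningTreeSets_iff (.inr rfl) he₀).1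
      (hL ▸ hs'), he₀, hL⟩)
  · exact absurd (newE_mem_of_mem_spanningTreeSets_subdiv hs') (by tauto)

theorem spanningTreeSets_subdiv (he : G.Adj u v) :
    spanningTreeSets (subdiv G u v) =
      ((spanningTreeSets G).filter (s(u, v) ∈ ·)).image (liftThrough u v) ∪
        (((spanningTreeSets G).filter (s(u, v) ∉ ·)).image (liftPendant u) ∪
          ((spanningTreeSets G).filter (s(u, v) ∉ ·)).image (liftPendant v)) := by
  ext s'
  simp only [mem_union, mem_image, mem_filter, and_assoc]
  refine ⟨exists_lift_eq_of_mem_spanningTreeSets_subdiv he, ?_⟩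
  rintro (⟨s, hs, hes, rfl⟩ | ⟨s, hs, hes, rfl⟩ | ⟨s, hs, hes, rfl⟩)
  · exact (liftThrough_mem_spanningTreeSets_iff he hes).2 hs
  · exact (liftPendant_mem_spanningTreeSets_iff (.inl rfl) hes).2 hs
  · exact (liftPendant_mem_spanningTreeSets_iff (.inr rfl) hes).2 hs

theorem sum_spanningTreeSets_subdiv {M : Type*} [AddCommMonoid M] (he : G.Adj u v)
    (F : Finset (Sym2 (V ⊕ Unit)) → M) :
    ∑ s' ∈ spanningTreeSets (subdiv G u v), F s' =
      ∑ s ∈ spanningTreeSets G, if s(u, v) ∈ s then F (liftThrough u v s)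
        else F (liftPendant u s) + F (liftPendant v s) := by
  have hd₁ : Disjoint (((spanningTreeSets G).filter (s(u, v) ∉ ·)).image (liftPendant u))
      (((spanningTreeSets G).filter (s(u, v) ∉ ·)).image (liftPendant v)) := by
    simp only [Finset.disjoint_left, mem_image]
    rintro _ ⟨s, -, rfl⟩ ⟨t, -, h⟩
    exact liftPendant_ne_liftPendant he.ne s t h.symm
  have hd₂ : Disjoint (((spanningTreeSets G).filter (s(u, v) ∈ ·)).image (liftThrough u v))
      (((spanningTreeSets G).filter (s(u, v) ∉ ·)).image (liftPendant u) ∪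
        ((spanningTreeSets G).filter (s(u, v) ∉ ·)).image (liftPendant v)) := by
    simp only [Finset.disjoint_left, mem_union, mem_image]
    rintro _ ⟨s, -, rfl⟩ (⟨t, -, h⟩ | ⟨t, -, h⟩)
    · exact liftThrough_ne_liftPendant he.ne u s t h.symm
    · exact liftThrough_ne_liftPendant he.ne v s t h.symm
  rw [spanningTreeSets_subdiv he, sum_union hd₂, sum_union hd₁, sum_ite, sum_add_distrib,
    sum_image (s := (spanningTreeSets G).filter (s(u, v) ∈ ·)) fun s hs t ht =>
      liftThrough_injOn (mem_filter.1 hs).2 (mem_filter.1 ht).2,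
    sum_image (liftPendant_injective u).injOn, sum_image (liftPendant_injective v).injOn]

end SpanningTrees

section Substitution

variable [DecidableEq V] {u v : V}

noncomputable def subdivSubst (u v : V) :
    MvPolynomial (Sym2 V) ℤ →+* MvPolynomial (Sym2 (V ⊕ Unit)) ℤ :=
  eval₂Hom (Int.castRingHom _)
    fun f => if f = s(u, v) then X (newE₁ u) + X (newE₂ v) else X (Sym2.map Sum.inl f)

theorem subdivSubst_prod_X_of_notMem {t : Finset (Sym2 V)} (ht : s(u, v) ∉ t) :
    subdivSubst u v (∏ f ∈ t, X f) = ∏ g ∈ t.image (Sym2.map Sum.inl), X g := by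
  rw [map_prod, prod_image map_inl_injective.injOn]
  refine prod_congr rfl fun f hf => ?_
  rw [subdivSubst, eval₂Hom_X', if_neg (ne_of_mem_of_not_mem hf ht)]

theorem subdivSubst_prod_X_of_mem {t : Finset (Sym2 V)} (ht : s(u, v) ∈ t) :
    subdivSubst u v (∏ f ∈ t, X f) =
      (X (newE₁ u) + X (newE₂ v)) * ∏ g ∈ (t.erase s(u, v)).image (Sym2.map Sum.inl), X g := by
  rw [← mul_prod_erase _ _ ht, map_mul, subdivSubst_prod_X_of_notMem (notMem_erase _ _),
    subdivSubst, eval₂Hom_X', if_pos rfl]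

end Substitution

theorem subdivision_firstSymanzik_general [Fintype V] [DecidableEq V]
    (G : SimpleGraph V) (u v : V) (he : G.Adj u v) :
    firstSymanzik (subdiv G u v) =
      eval₂Hom (Int.castRingHom (MvPolynomial (Sym2 (V ⊕ Unit)) ℤ))
        (fun f => if f = s(u, v) then X (newE₁ u) + X (newE₂ v) else X (Sym2.map Sum.inl f))
        (firstSymanzik G) := by
  change _ = subdivSubst u v _
  rw [firstSymanzik, firstSymanzik, sum_spanningTreeSets_subdiv he, map_sum, edgeFinset_subdiv]
  refine sum_congr rfl fun s _ => ?_
  split_ifs with hes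
  · rw [liftThrough_sdiff_liftThrough hes,
      subdivSubst_prod_X_of_notMem (notMem_sdiff_of_mem_right hes)]
  · rw [subdivSubst_prod_X_of_mem (mem_sdiff.2 ⟨Set.mem_toFinset.2 he, hes⟩),
      liftThrough_sdiff_liftPendant_left he.ne, liftThrough_sdiff_liftPendant_right he.ne,
      prod_insert (by simp), prod_insert (by simp)]
    ring

/-- The first Symanzik polynomial of the subdivision of `G` at `e = {u,v}` is obtained from the
first Symanzik polynomial of `G` by substituting `x_{e₁} + x_{e₂}` for `x_e` (and renaming
`x_f` to `x_f` for every other edge `f`). -/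
theorem subdivision_firstSymanzik [Fintype V] [DecidableEq V]
    (G : SimpleGraph V) (hG : G.Connected) (u v : V) (he : G.Adj u v) :
    firstSymanzik (subdiv G u v) =
      eval₂Hom (Int.castRingHom (MvPolynomial (Sym2 (V ⊕ Unit)) ℤ))
        (fun f => if f = s(u, v) then X (newE₁ u) + X (newE₂ v) else X (Sym2.map Sum.inl f))
        (firstSymanzik G) :=
  subdivision_firstSymanzik_general G u v he
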